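/- arXiv:math/0211351 — 5 statements merged into one kernel-verified Lean document; each statement's English description precedes it below -/
import Mathlib

section
/- The inequality 1 + β³ > β(1 + α(1-k) + βk) holds for all real β ∈ (0,1), all integers k ≥ 1, and all α with β ≤ α ≤ 1/k. -/
/-- The inequality `1 + β³ > β(1 + α(1-k) + βk)` holds for all real `β ∈ (0,1)`,
all integers `k ≥ 1`, and all `α` with `β ≤ α ≤ 1/k`. -/
theorem key_expansion_inequality (β : ℝ) (hβ0 : 0 < β) (hβ1 : β < 1)
    (k : ℕ) (hk : 1 ≤ k) (α : ℝ) (hβα : β ≤ α) (hαk : α ≤ 1 / (k : ℝ)) :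
    1 + β ^ 3 > β * (1 + α * (1 - (k : ℝ)) + β * k) := by
  have hk1 : (1:ℝ) ≤ (k:ℝ) := by exact_mod_cast hk
  nlinarith [mul_nonneg (mul_nonneg hβ0.le (sub_nonneg.2 hβα)) (sub_nonneg.2 hk1),
    mul_pos (sub_pos.2 hβ1) (mul_pos (sub_pos.2 hβ1) (by linarith : (0:ℝ) < 1 + β))]
end

section
/- For every integer k ≥ 2, the largest root r̄_k of P_k(x) = x³ - x² - kx + 1 satisfies r̄_k ≤ k^ρ, where ρ = log(r̄_2)/log 2 and r̄_2 is the largest root of P_2(x) = x³ - x² - 2x + 1. -/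
/-- For every integer `k ≥ 2`, the largest root `r̄_k` of `P_k(x) = x³ - x² - kx + 1`
satisfies `r̄_k ≤ k^ρ`, where `ρ = log(r̄_2)/log 2` and `r̄_2` is the largest root
of `P_2`. -/
theorem largest_root_rpow_bound (k : ℕ) (hk : 2 ≤ k) (r2 rk : ℝ)
    (hr2 : IsGreatest {x : ℝ | x ^ 3 - x ^ 2 - 2 * x + 1 = 0} r2)
    (hrk : IsGreatest {x : ℝ | x ^ 3 - x ^ 2 - (k : ℝ) * x + 1 = 0} rk) :
    rk ≤ (k : ℝ) ^ (Real.log r2 / Real.log 2) := by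
  have hlog2 : (0:ℝ) < Real.log 2 := Real.log_pos (by norm_num)
  -- lower bound on r2
  have hr2low : (9/5 : ℝ) ≤ r2 := by
    obtain ⟨c, hc, hfc⟩ := intermediate_value_Icc (by norm_num : (9/5:ℝ) ≤ 2)
      (Continuous.continuousOn
        (by continuity : Continuous fun x : ℝ => x ^ 3 - x ^ 2 - 2 * x + 1))
      (show (0:ℝ) ∈ Set.Icc ((9/5:ℝ)^3 - (9/5)^2 - 2*(9/5) + 1) ((2:ℝ)^3 - 2^2 - 2*2 + 1)
        by constructor <;> norm_num)
    exact le_trans hc.1 (hr2.2 hfc)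
  -- upper bound on r2
  have hr2hi : r2 ≤ 2 := by
    by_contra h
    push_neg at h
    have h0 := hr2.1
    simp only [Set.mem_setOf_eq] at h0
    nlinarith
  have hr2pos : (0:ℝ) < r2 := by linarith
  -- bounds on ρ
  have hρlow : (21/25 : ℝ) ≤ Real.log r2 / Real.log 2 := by
    rw [le_div_iff₀ hlog2]
    have h1 : Real.log ((2:ℝ) ^ (21:ℕ)) ≤ Real.log ((9/5:ℝ) ^ (25:ℕ)) := by
      apply Real.log_le_log (by positivity)
      norm_num
    rw [Real.log_pow, Real.log_pow] at h1
    have h2 : Real.log (9/5 : ℝ) ≤ Real.log r2 :=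
      Real.log_le_log (by norm_num) hr2low
    push_cast at h1
    linarith
  have hρhi : Real.log r2 / Real.log 2 ≤ 1 := by
    rw [div_le_one hlog2]
    exact Real.log_le_log hr2pos hr2hi
  rcases eq_or_lt_of_le hk with hk2 | hk3
  · -- case k = 2
    subst hk2
    have hsets : {x : ℝ | x ^ 3 - x ^ 2 - ((2:ℕ) : ℝ) * x + 1 = 0}
        = {x : ℝ | x ^ 3 - x ^ 2 - 2 * x + 1 = 0} := by
      norm_num
    rw [hsets] at hrk
    have hrr : rk = r2 := le_antisymm (hr2.2 hrk.1) (hrk.2 hr2.1)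
    have : ((2:ℕ) : ℝ) ^ (Real.log r2 / Real.log 2) = r2 := by
      rw [show ((2:ℕ):ℝ) = 2 by norm_num,
        Real.rpow_def_of_pos (by norm_num : (0:ℝ) < 2)]
      rw [mul_div_cancel₀ _ (ne_of_gt hlog2)]
      exact Real.exp_log hr2pos
    rw [this, hrr]
  · -- case k ≥ 3
    have hk3' : (3:ℝ) ≤ (k:ℝ) := by exact_mod_cast hk3
    set ρ := Real.log r2 / Real.log 2 with hρdef
    set a := (k:ℝ) ^ ρ with hadef
    set b := (k:ℝ) ^ ((21:ℝ)/25) with hbdef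
    have hkpos : (0:ℝ) < (k:ℝ) := by linarith
    have hapos : (0:ℝ) < a := Real.rpow_pos_of_pos hkpos _
    have hbpos : (0:ℝ) < b := Real.rpow_pos_of_pos hkpos _
    have hba : b ≤ a := Real.rpow_le_rpow_of_exponent_le (by linarith) hρlow
    have hak : a ≤ (k:ℝ) := by
      calc a ≤ (k:ℝ) ^ (1:ℝ) :=
            Real.rpow_le_rpow_of_exponent_le (by linarith) hρhi
        _ = (k:ℝ) := Real.rpow_one _
    -- b^2 ≥ 2k
    have hkey : (2:ℝ) ≤ (k:ℝ) ^ ((17:ℝ)/25) := by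
      have h3 : (3:ℝ) ^ ((17:ℝ)/25) ≤ (k:ℝ) ^ ((17:ℝ)/25) :=
        Real.rpow_le_rpow (by norm_num) hk3' (by norm_num)
      have h4 : (2:ℝ) ≤ (3:ℝ) ^ ((17:ℝ)/25) := by
        have hpow : ((2:ℝ)) ^ (25:ℕ) ≤ ((3:ℝ) ^ ((17:ℝ)/25)) ^ (25:ℕ) := by
          rw [← Real.rpow_natCast ((3:ℝ) ^ ((17:ℝ)/25)) 25, ← Real.rpow_mul (by norm_num)]
          norm_num
        exact le_of_pow_le_pow_left₀ (by norm_num)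
          (Real.rpow_nonneg (by norm_num : (0:ℝ) ≤ 3) ((17:ℝ)/25)) hpow
      linarith
    have hb2 : 2 * (k:ℝ) ≤ b ^ 2 := by
      have : b ^ 2 = (k:ℝ) ^ ((17:ℝ)/25) * (k:ℝ) := by
        rw [hbdef, ← Real.rpow_natCast ((k:ℝ) ^ ((21:ℝ)/25)) 2, ← Real.rpow_mul (le_of_lt hkpos)]
        rw [show ((21:ℝ)/25 * (2:ℕ)) = (17:ℝ)/25 + 1 by push_cast; ring,
          Real.rpow_add hkpos, Real.rpow_one]
      rw [this]
      nlinarith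
    have ha2 : 2 * (k:ℝ) ≤ a ^ 2 := by nlinarith
    have hage2 : (2:ℝ) ≤ a := by nlinarith
    -- conclude
    by_contra h
    push_neg at h
    have h0 := hrk.1
    simp only [Set.mem_setOf_eq] at h0
    have h1 : (0:ℝ) ≤ (rk - a) * (rk + a - 1) :=
      mul_nonneg (by linarith) (by linarith)
    have h2 : (0:ℝ) ≤ rk ^ 2 - rk - (k:ℝ) := by nlinarith
    have h3 : (0:ℝ) ≤ rk * (rk ^ 2 - rk - (k:ℝ)) :=
      mul_nonneg (by linarith) h2
    nlinarith
end

section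
/- For each integer k ≥ 1, the fixed point of the Gauss map G in the region U_k = {(α,β) : 1/(k+1) < α ≤ 1/k, 0 < β < α} is (α,β) = (r_k, r_k²), where r_k is the root of P_k(x) = x³ - x² - kx + 1 lying in (1/(k+1), 1/k]. That is, G(r_k, r_k²) = (r_k, r_k²). -/
/-- The Gauss map on parameter space: `G(α,β) = (β/α, (β-1)/α + ⌊1/α⌋)`. -/
noncomputable def gaussG (p : ℝ × ℝ) : ℝ × ℝ :=
  (p.2 / p.1, (p.2 - 1) / p.1 + (⌊1 / p.1⌋ : ℝ))

/-- For each `k ≥ 1`, if `r` is the root of `P_k(x) = x³ - x² - kx + 1` lying in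
`(1/(k+1), 1/k]`, then `(r, r²)` is a fixed point of the Gauss map `G`. -/
theorem gauss_fixed_point_Uk (k : ℕ) (hk : 1 ≤ k) (r : ℝ)
    (hroot : r ^ 3 - r ^ 2 - (k : ℝ) * r + 1 = 0)
    (hr : r ∈ Set.Ioc (1 / ((k : ℝ) + 1)) (1 / (k : ℝ))) :
    gaussG (r, r ^ 2) = (r, r ^ 2) := by
  obtain ⟨h1, h2⟩ := hr
  have hkpos : (0 : ℝ) < k := by exact_mod_cast hk
  have hrpos : 0 < r := lt_trans (by positivity) h1
  have hfloor : ⌊1 / r⌋ = (k : ℤ) := by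
    have hle : (k : ℝ) ≤ 1 / r := by
      rw [le_div_iff₀ hrpos]
      calc (k:ℝ) * r ≤ (k:ℝ) * (1/k) := by
            exact mul_le_mul_of_nonneg_left h2 hkpos.le
        _ = 1 := by field_simp
    have hlt : 1 / r < (k : ℝ) + 1 := by
      rw [div_lt_iff₀ hrpos]
      have := (div_lt_iff₀ (by positivity : (0:ℝ) < (k:ℝ)+1)).mp h1
      linarith [mul_comm r ((k:ℝ)+1)]
    have : ⌊1 / r⌋ = (k : ℤ) := by
      apply Int.floor_eq_iff.mpr
      · constructor <;> [exact_mod_cast hle; exact_mod_cast hlt]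
    exact this
  unfold gaussG
  simp only [Prod.mk.injEq, hfloor]
  constructor
  · field_simp
  · push_cast
    field_simp
    nlinarith [hroot]
end

section
/- For every integer k ≥ 1, the map F̃_k(ξ,η) = (1 - η/(kη + ξ), 1/(kη + ξ)) maps the triangle S̃ = {(ξ,η) : ξ ≤ 1, η ≤ 1, ξ + η ≥ 1} into the triangle V_k with vertices (1,1), ((k-1)/k, 1/k), and (k/(k+1), 1/(k+1)), and the triangles V_k, k ≥ 1, have pairwise disjoint interiors. -/
/-!
`F̃_k` is a projective map sending the vertices `(1,0)`, `(0,1)`, `(1,1)` of `S̃` to the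
vertices `(1,1)`, `((k-1)/k, 1/k)`, `(k/(k+1), 1/(k+1))` of `V_k`, with denominator `kη + ξ`
positive on `S̃`; so it maps `S̃` onto `V_k`, a point with barycentric coordinates
`(1-η, 1-ξ, ξ+η-1)` going to the point with barycentric coordinates proportional to
`(1-η, k(1-ξ), (k+1)(ξ+η-1))`.

Seen from its vertex `(1,1)`, the triangle `V_k` lies in the wedge of directions with slopes
between `k-1` and `k`. For `k < k'` these wedges meet only on the line of slope `k` through
`(1,1)`, which has empty interior.
-/

open Set

/-- The projective action of the substitution matrix of `χ_k` in coordinates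
`(ξ,η)`: `F̃_k(ξ,η) = (1 - η/(kη + ξ), 1/(kη + ξ))`. -/
noncomputable def Ftil (k : ℕ) (p : ℝ × ℝ) : ℝ × ℝ :=
  (1 - p.2 / (k * p.2 + p.1), 1 / (k * p.2 + p.1))

/-- The triangle `S̃ = {(ξ,η) : ξ ≤ 1, η ≤ 1, ξ + η ≥ 1}`. -/
def Stil : Set (ℝ × ℝ) := {p | p.1 ≤ 1 ∧ p.2 ≤ 1 ∧ 1 ≤ p.1 + p.2}

/-- The triangle `V_k` with vertices `(1,1)`, `((k-1)/k, 1/k)`, `(k/(k+1), 1/(k+1))`. -/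
noncomputable def Vtri (k : ℕ) : Set (ℝ × ℝ) :=
  convexHull ℝ {((1 : ℝ), (1 : ℝ)), (((k : ℝ) - 1) / k, (1 : ℝ) / k),
    ((k : ℝ) / (k + 1), 1 / ((k : ℝ) + 1))}

open Filter Topology

theorem smul_add_smul_add_smul_mem_convexHull {𝕜 E : Type*} [Field 𝕜] [LinearOrder 𝕜]
    [IsStrictOrderedRing 𝕜] [AddCommGroup E] [Module 𝕜 E] {x y z : E} {a b c : 𝕜}
    (ha : 0 ≤ a) (hb : 0 ≤ b) (hc : 0 ≤ c) (habc : a + b + c = 1) :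
    a • x + b • y + c • z ∈ convexHull 𝕜 {x, y, z} := by
  have h := (convex_convexHull 𝕜 {x, y, z}).sum_mem (t := Finset.univ) (w := ![a, b, c])
    (z := ![x, y, z]) (by intro i _; fin_cases i <;> simpa)
    (by simpa [Fin.sum_univ_three] using habc)
    (by intro i _; fin_cases i <;> apply subset_convexHull <;> simp)
  simpa [Fin.sum_univ_three, add_assoc] using h

theorem interior_setOf_snd_eq_eq_empty {X Y : Type*} [TopologicalSpace X] [TopologicalSpace Y]
    [∀ y : Y, (𝓝[≠] y).NeBot] (φ : X → Y) : interior {q : X × Y | q.2 = φ q.1} = ∅ := by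
  refine eq_empty_of_forall_notMem fun p hp => ?_
  obtain ⟨u, hu, v, hv, huv⟩ := mem_nhds_prod_iff.1 (mem_interior_iff_mem_nhds.1 hp)
  have hp₂ : p.2 = φ p.1 := interior_subset (s := {q : X × Y | q.2 = φ q.1}) hp
  have hv_sub : v ⊆ {p.2} := fun y hy => hp₂ ▸ huv (mk_mem_prod (mem_of_mem_nhds hu) hy)
  have h := mem_interior_iff_mem_nhds.2 (mem_of_superset hv hv_sub)
  rwa [interior_singleton] at h

theorem Ftil_eq_barycentric (k : ℕ) (hk : k ≠ 0) (p : ℝ × ℝ) (hD : k * p.2 + p.1 ≠ 0) :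
    Ftil k p =
      ((1 - p.2) / (k * p.2 + p.1)) • ((1 : ℝ), (1 : ℝ)) +
      (k * (1 - p.1) / (k * p.2 + p.1)) • (((k : ℝ) - 1) / k, (1 : ℝ) / k) +
      ((k + 1) * (p.1 + p.2 - 1) / (k * p.2 + p.1)) • ((k : ℝ) / (k + 1), 1 / ((k : ℝ) + 1)) := by
  have hk' : (k : ℝ) ≠ 0 := Nat.cast_ne_zero.2 hk
  simp only [Ftil, Prod.smul_mk, smul_eq_mul, Prod.mk_add_mk, Prod.mk.injEq]
  constructor
  · rw [← div_self hD, ← sub_div]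
    field_simp
    ring
  · field_simp
    ring

theorem Ftil_mem_Vtri {k : ℕ} (hk : 1 ≤ k) {p : ℝ × ℝ} (hp : p ∈ Stil) : Ftil k p ∈ Vtri k := by
  obtain ⟨hξ, hη, hξη⟩ := hp
  have hk' : (1 : ℝ) ≤ k := by exact_mod_cast hk
  have hD : 0 < k * p.2 + p.1 := by nlinarith
  rw [Ftil_eq_barycentric k (by omega) p hD.ne']
  refine smul_add_smul_add_smul_mem_convexHull ?_ ?_ ?_ ?_
  · exact div_nonneg (by linarith) hD.le
  · exact div_nonneg (by nlinarith) hD.le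
  · exact div_nonneg (by nlinarith) hD.le
  · rw [← add_div, ← add_div, div_eq_one_iff_eq hD.ne']
    ring

theorem convex_setOf_sub_one_le_mul_sub_one (m : ℝ) :
    Convex ℝ {q : ℝ × ℝ | q.2 - 1 ≤ m * (q.1 - 1)} := by
  intro x hx y hy a b ha hb hab
  obtain rfl : b = 1 - a := by linarith
  simp only [mem_ofPred_eq, Prod.fst_add, Prod.snd_add, Prod.smul_fst, Prod.smul_snd,
    smul_eq_mul] at *
  nlinarith [mul_le_mul_of_nonneg_left hx ha, mul_le_mul_of_nonneg_left hy hb]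

theorem convex_setOf_mul_sub_one_le_sub_one (m : ℝ) :
    Convex ℝ {q : ℝ × ℝ | m * (q.1 - 1) ≤ q.2 - 1} := by
  intro x hx y hy a b ha hb hab
  obtain rfl : b = 1 - a := by linarith
  simp only [mem_ofPred_eq, Prod.fst_add, Prod.snd_add, Prod.smul_fst, Prod.smul_snd,
    smul_eq_mul] at *
  nlinarith [mul_le_mul_of_nonneg_left hx ha, mul_le_mul_of_nonneg_left hy hb]

theorem Vtri_subset_wedge {k : ℕ} (hk : 1 ≤ k) :
    Vtri k ⊆ {q | k * (q.1 - 1) ≤ q.2 - 1} ∩ {q | q.2 - 1 ≤ (k - 1) * (q.1 - 1)} := by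
  have hk' : (1 : ℝ) ≤ k := by exact_mod_cast hk
  refine convexHull_min ?_ ((convex_setOf_mul_sub_one_le_sub_one _).inter
    (convex_setOf_sub_one_le_mul_sub_one _))
  rintro q (rfl | rfl | rfl) <;> simp only [mem_inter_iff, mem_ofPred_eq]
  · simp
  · constructor <;> field_simp <;> nlinarith
  · constructor <;> field_simp <;> nlinarith

theorem Vtri_inter_subset_line {k k' : ℕ} (hk : 1 ≤ k) (hkk' : k < k') :
    Vtri k ∩ Vtri k' ⊆ {q | q.2 = k * (q.1 - 1) + 1} := by
  rintro q ⟨hq, hq'⟩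
  obtain ⟨h₁, h₂⟩ := Vtri_subset_wedge hk hq
  obtain ⟨h₁', h₂'⟩ := Vtri_subset_wedge (hk.trans hkk'.le) hq'
  simp only [mem_ofPred_eq] at h₁ h₂ h₁' h₂' ⊢
  have hlt : (k : ℝ) + 1 ≤ k' := by exact_mod_cast hkk'
  have hq₁ : q.1 - 1 ≤ 0 := by nlinarith
  nlinarith

/-- For every `k ≥ 1`, `F̃_k` maps `S̃` into the triangle `V_k`, and the triangles
`V_k` have pairwise disjoint interiors. -/
theorem Ftil_maps_into_Vk_and_disjoint :
    (∀ k : ℕ, 1 ≤ k → ∀ p ∈ Stil, Ftil k p ∈ Vtri k) ∧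
    (∀ k k' : ℕ, 1 ≤ k → 1 ≤ k' → k ≠ k' →
      interior (Vtri k) ∩ interior (Vtri k') = ∅) := by
  refine ⟨fun k hk p hp => Ftil_mem_Vtri hk hp, fun k k' hk hk' hne => ?_⟩
  wlog hlt : k < k' generalizing k k'
  · rw [inter_comm]
    exact this k' k hk' hk hne.symm (by omega)
  rw [← interior_inter, ← subset_empty_iff,
    ← interior_setOf_snd_eq_eq_empty (fun x : ℝ => k * (x - 1) + 1)]
  exact interior_mono (Vtri_inter_subset_line hk hlt)
end

section
/- For the interval translation map T = T_{α,β} with 0 < β < α < 1 and 1/α not an integer, let k = ⌊1/α⌋ and consider the first return map T̂ of T to Δ = [1-α, 1). Then T̂ agrees with T on [1-α, 1-β); and if the return times of points in [1-β,1) take two values, then the affinely rescaled first return map equals T_{α',β'} with (α',β') = (β/α, (β-1)/α + ⌊1/α⌋). -/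
open Set

/-- The interval translation map `T_{α,β}` on `[0,1)`. -/
noncomputable def Tab (α β : ℝ) (x : ℝ) : ℝ :=
  if x < 1 - α then x + α else if x < 1 - β then x + β else x + β - 1

/-- First return time of `x` to the set `Δ` under `f`. -/
noncomputable def retTime (f : ℝ → ℝ) (Δ : Set ℝ) (x : ℝ) : ℕ :=
  sInf {n : ℕ | 0 < n ∧ f^[n] x ∈ Δ}

/-- First return map to the set `Δ` under `f`. -/
noncomputable def retMap (f : ℝ → ℝ) (Δ : Set ℝ) (x : ℝ) : ℝ :=
  f^[retTime f Δ x] x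

private lemma iterTab (α β : ℝ) (y : ℝ) :
    ∀ n : ℕ, (∀ j : ℕ, j < n → y + j * α < 1 - α) →
      (Tab α β)^[n] y = y + n * α := by
  intro n
  induction n with
  | zero => intro _; simp
  | succ n ih =>
    intro h
    rw [Function.iterate_succ_apply', ih (fun j hj => h j (by omega))]
    have hn := h n (by omega)
    unfold Tab
    rw [if_pos hn]
    push_cast
    ring

private lemma ret_eq (α β : ℝ) (x y : ℝ) (n : ℕ)
    (hy : Tab α β x = y)
    (hlt : ∀ j : ℕ, j < n → y + j * α < 1 - α)
    (hmem : 1 - α ≤ y + n * α ∧ y + n * α < 1) :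
    retTime (Tab α β) (Ico (1 - α) 1) x = n + 1 ∧
    retMap (Tab α β) (Ico (1 - α) 1) x = y + n * α := by
  have hiter : ∀ m : ℕ, m ≤ n → (Tab α β)^[m + 1] x = y + m * α := by
    intro m hm
    rw [Function.iterate_succ_apply, hy,
      iterTab α β y m (fun j hj => hlt j (lt_of_lt_of_le hj hm))]
  have hS : (n + 1) ∈ {m : ℕ | 0 < m ∧ (Tab α β)^[m] x ∈ Ico (1 - α) (1:ℝ)} :=
    ⟨Nat.succ_pos n, by rw [hiter n le_rfl]; exact ⟨hmem.1, hmem.2⟩⟩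
  have hT : retTime (Tab α β) (Ico (1 - α) 1) x = n + 1 := by
    unfold retTime
    refine le_antisymm (Nat.sInf_le hS) (le_csInf ⟨_, hS⟩ ?_)
    rintro m ⟨hpos, hmem'⟩
    by_contra hc
    push_neg at hc
    obtain ⟨m', rfl⟩ : ∃ m'', m = m'' + 1 := ⟨m - 1, by omega⟩
    have hm'n : m' < n := by omega
    rw [hiter m' hm'n.le] at hmem'
    exact absurd hmem'.1 (not_le.mpr (hlt m' hm'n))
  exact ⟨hT, by unfold retMap; rw [hT, hiter n le_rfl]⟩

/-- For `T = T_{α,β}` with `0 < β < α < 1` and `1/α` not an integer, the first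
return map `T̂` of `T` to `Δ = [1-α,1)` agrees with `T` on `[1-α, 1-β)`; and if the
return times on `[1-β,1)` take two values, then the affinely rescaled first return
map equals `T_{α',β'}` with `(α',β') = (β/α, (β-1)/α + ⌊1/α⌋)`. -/
theorem rauzy_induction_step (α β : ℝ) (hβ : 0 < β) (hβα : β < α) (hα : α < 1)
    (hnint : ¬ ∃ m : ℤ, (1 / α : ℝ) = m) :
    (∀ x ∈ Ico (1 - α) (1 - β), retMap (Tab α β) (Ico (1 - α) 1) x = Tab α β x) ∧
    ((∃ x ∈ Ico (1 - β) 1, ∃ y ∈ Ico (1 - β) 1,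
        retTime (Tab α β) (Ico (1 - α) 1) x ≠ retTime (Tab α β) (Ico (1 - α) 1) y) →
      ∀ x ∈ Ico (1 - α) 1,
        (retMap (Tab α β) (Ico (1 - α) 1) x - (1 - α)) / α
          = Tab (β / α) ((β - 1) / α + (⌊1 / α⌋ : ℝ)) ((x - (1 - α)) / α)) := by
  have hα0 : 0 < α := hβ.trans hβα
  set k : ℤ := ⌊1 / α⌋ with hk
  have hk1 : 1 ≤ k := Int.le_floor.mpr (by push_cast; rw [le_div_iff₀ hα0]; linarith)
  have hklt : (k : ℝ) < 1 / α :=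
    lt_of_le_of_ne (Int.floor_le _) (fun h => hnint ⟨k, h.symm⟩)
  have hkα : (k : ℝ) * α < 1 := by
    rw [lt_div_iff₀ hα0] at hklt; linarith
  have hk1α : 1 < ((k : ℝ) + 1) * α := by
    have h2 := Int.lt_floor_add_one (1 / α)
    rw [div_lt_iff₀ hα0] at h2
    push_cast at h2 ⊢
    nlinarith
  set kn : ℕ := k.toNat with hkn
  have hknk : (kn : ℝ) = (k : ℝ) := by
    rw [hkn]; exact_mod_cast Int.toNat_of_nonneg (by omega)
  have hkn1 : 1 ≤ kn := by omega
  -- Part 1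
  have part1 : ∀ x ∈ Ico (1 - α) (1 - β),
      retTime (Tab α β) (Ico (1 - α) 1) x = 1 ∧
      retMap (Tab α β) (Ico (1 - α) 1) x = x + β := by
    intro x hx
    obtain ⟨hx1, hx2⟩ := hx
    have hy : Tab α β x = x + β := by
      unfold Tab; rw [if_neg (by linarith), if_pos (by linarith)]
    have h := ret_eq α β x (x + β) 0 hy (by intro j hj; omega)
      (by norm_num; constructor <;> linarith)
    simpa using h
  refine ⟨fun x hx => by
    rw [(part1 x hx).2]
    obtain ⟨hx1, hx2⟩ := hx
    unfold Tab
    rw [if_neg (by linarith), if_pos (by linarith)], ?_⟩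
  intro _ x hx
  obtain ⟨hx1, hx2⟩ := hx
  have hane : α ≠ 0 := ne_of_gt hα0
  have hexpα : (1 - β / α) * α = α - β := by field_simp
  have hexpβ : (1 - ((β - 1) / α + (k:ℝ))) * α = α - (β - 1) - k * α := by
    field_simp; ring
  by_cases hcase : x < 1 - β
  · -- first branch: retMap x = x + β
    rw [(part1 x ⟨hx1, hcase⟩).2]
    unfold Tab
    rw [if_pos (by rw [div_lt_iff₀ hα0, hexpα]; linarith)]
    field_simp
    ring
  · push_neg at hcase
    have hy : Tab α β x = x + β - 1 := by
      unfold Tab; rw [if_neg (by linarith), if_neg (by linarith)]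
    have hu2 : ¬ (x - (1 - α)) / α < 1 - β / α := by
      rw [not_lt, le_div_iff₀ hα0, hexpα]; linarith
    by_cases hsub : x + β - 1 < 1 - (k:ℝ) * α
    · -- n = kn
      have h := ret_eq α β x (x + β - 1) kn hy
        (by
          intro j hj
          have hjr : (j:ℝ) + 1 ≤ (kn:ℝ) := by exact_mod_cast hj
          rw [hknk] at hjr
          nlinarith)
        (by
          rw [hknk]
          constructor
          · nlinarith
          · linarith)
      rw [h.2, hknk]
      unfold Tab
      rw [if_neg hu2, if_pos (by rw [div_lt_iff₀ hα0, hexpβ]; linarith)]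
      field_simp
      ring
    · push_neg at hsub
      have hcast : ((kn - 1 : ℕ) : ℝ) = (k:ℝ) - 1 := by
        rw [Nat.cast_sub hkn1, hknk, Nat.cast_one]
      have h := ret_eq α β x (x + β - 1) (kn - 1) hy
        (by
          intro j hj
          have hjr : (j:ℝ) + 1 ≤ ((kn - 1 : ℕ):ℝ) := by exact_mod_cast hj
          rw [hcast] at hjr
          nlinarith)
        (by
          rw [hcast]
          constructor
          · nlinarith
          · nlinarith)
      rw [h.2, hcast]
      unfold Tab
      rw [if_neg hu2, if_neg (by rw [not_lt, le_div_iff₀ hα0, hexpβ]; linarith)]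
      field_simp
      ring
end
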